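/- The relation ≪ on T-lists whose elements have the same root type is a total order. -/
import Mathlib


/-- A T-tree: a node labeled by a type (ℕ), with children grouped into
    T-lists (one list per component type, in type order). -/
inductive TTree : Type where
  | node : ℕ → List (List TTree) → TTree

namespace TTree

/-- The root type (label) of a T-tree. -/
def label : TTree → ℕ
  | .node a _ => a

/-- The list of T-lists of a T-tree. -/
def tlists : TTree → List (List TTree)
  | .node _ ls => ls

/-- A T-tree is a leaf iff all its T-lists are empty. -/
def isLeaf : TTree → Bool
  | .node _ ls => ls.all List.isEmpty

mutual
  /-- Comparison of T-trees: root types first, then the sequences of T-lists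
      lexicographically by the T-list order ≪. -/
  def cmpT : TTree → TTree → Ordering
    | .node a ls, .node b ls' => (compare a b).then (cmpOuter ls ls')
  /-- Lexicographic comparison of sequences of T-lists by ≪
      (≪ compares T-lists by length first, then lexicographically by ⋞). -/
  def cmpOuter : List (List TTree) → List (List TTree) → Ordering
    | [], [] => .eq
    | [], _ :: _ => .lt
    | _ :: _, [] => .gt
    | l :: ls, l' :: ls' =>
        (((compare l.length l'.length).then (cmpInner l l')).then (cmpOuter ls ls'))
  /-- Lexicographic comparison of equal-length T-lists by ⋞. -/
  def cmpInner : List TTree → List TTree → Ordering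
    | [], [] => .eq
    | [], _ :: _ => .lt
    | _ :: _, [] => .gt
    | a :: as, b :: bs => (cmpT a b).then (cmpInner as bs)
end

/-- The order ⋞ on T-trees. -/
def le (C C' : TTree) : Prop := cmpT C C' ≠ .gt

/-- The order ≪ on T-lists: length first, then lexicographically by ⋞. -/
def lle (L L' : List TTree) : Prop :=
  ((compare L.length L'.length).then (cmpInner L L')) ≠ .gt

/-- Canonicity of a T-tree: every T-list sorted non-decreasingly by ⋞,
    every subtree canonical. -/
inductive Canonical : TTree → Prop where
  | mk (a : ℕ) (ls : List (List TTree))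
      (hsorted : ∀ L ∈ ls, L.Chain' le)
      (hrec : ∀ L ∈ ls, ∀ c ∈ L, Canonical c) :
      Canonical (.node a ls)

end TTree


namespace TTree

private lemma natCompare_swap (a b : ℕ) : (compare a b).swap = compare b a := by
  rcases lt_trichotomy a b with h | h | h
  · rw [compare_lt_iff_lt.2 h, compare_gt_iff_gt.2 h]; rfl
  · rw [compare_eq_iff_eq.2 h, compare_eq_iff_eq.2 h.symm]; rfl
  · rw [compare_gt_iff_gt.2 h, compare_lt_iff_lt.2 h]; rfl

mutual
theorem cmpT_swap : ∀ a b, (cmpT a b).swap = cmpT b a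
  | .node a ls, .node b ls' => by
    rw [cmpT, cmpT, Ordering.swap_then, natCompare_swap, cmpOuter_swap]
theorem cmpOuter_swap : ∀ ls ls', (cmpOuter ls ls').swap = cmpOuter ls' ls
  | [], [] => rfl
  | [], _ :: _ => rfl
  | _ :: _, [] => rfl
  | l :: ls, l' :: ls' => by
    rw [cmpOuter, cmpOuter, Ordering.swap_then, Ordering.swap_then,
      natCompare_swap, cmpInner_swap, cmpOuter_swap]
theorem cmpInner_swap : ∀ l l', (cmpInner l l').swap = cmpInner l' l
  | [], [] => rfl
  | [], _ :: _ => rfl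
  | _ :: _, [] => rfl
  | a :: as, b :: bs => by
    rw [cmpInner, cmpInner, Ordering.swap_then, cmpT_swap, cmpInner_swap]
end

mutual
theorem cmpT_eq : ∀ a b, cmpT a b = .eq → a = b
  | .node a ls, .node b ls' => by
    rw [cmpT, Ordering.then_eq_eq]
    rintro ⟨h1, h2⟩
    rw [compare_eq_iff_eq.1 h1, cmpOuter_eq _ _ h2]
theorem cmpOuter_eq : ∀ ls ls', cmpOuter ls ls' = .eq → ls = ls'
  | [], [] => fun _ => rfl
  | [], _ :: _ => by simp [cmpOuter]
  | _ :: _, [] => by simp [cmpOuter]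
  | l :: ls, l' :: ls' => by
    rw [cmpOuter, Ordering.then_eq_eq, Ordering.then_eq_eq]
    rintro ⟨⟨-, h2⟩, h3⟩
    rw [cmpInner_eq _ _ h2, cmpOuter_eq _ _ h3]
theorem cmpInner_eq : ∀ l l', cmpInner l l' = .eq → l = l'
  | [], [] => fun _ => rfl
  | [], _ :: _ => by simp [cmpInner]
  | _ :: _, [] => by simp [cmpInner]
  | a :: as, b :: bs => by
    rw [cmpInner, Ordering.then_eq_eq]
    rintro ⟨h1, h2⟩
    rw [cmpT_eq _ _ h1, cmpInner_eq _ _ h2]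
end

mutual
theorem cmpT_refl : ∀ a, cmpT a a = .eq
  | .node a ls => by
    rw [cmpT, Ordering.then_eq_eq]
    exact ⟨compare_eq_iff_eq.2 rfl, cmpOuter_refl ls⟩
theorem cmpOuter_refl : ∀ ls, cmpOuter ls ls = .eq
  | [] => rfl
  | l :: ls => by
    rw [cmpOuter, Ordering.then_eq_eq, Ordering.then_eq_eq]
    exact ⟨⟨compare_eq_iff_eq.2 rfl, cmpInner_refl l⟩, cmpOuter_refl ls⟩
theorem cmpInner_refl : ∀ l, cmpInner l l = .eq
  | [] => rfl
  | a :: as => by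
    rw [cmpInner, Ordering.then_eq_eq]
    exact ⟨cmpT_refl a, cmpInner_refl as⟩
end

mutual
theorem cmpT_lt_trans : ∀ a b c, cmpT a b = .lt → cmpT b c = .lt → cmpT a c = .lt
  | .node a ls, .node b ms, .node c ns => by
    rw [cmpT, cmpT, cmpT, Ordering.then_eq_lt, Ordering.then_eq_lt, Ordering.then_eq_lt]
    rintro (h1 | ⟨h1, h1'⟩) (h2 | ⟨h2, h2'⟩)
    · exact Or.inl (compare_lt_iff_lt.2 ((compare_lt_iff_lt.1 h1).trans (compare_lt_iff_lt.1 h2)))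
    · exact Or.inl (compare_eq_iff_eq.1 h2 ▸ h1)
    · exact Or.inl (compare_eq_iff_eq.1 h1 ▸ h2)
    · exact Or.inr ⟨compare_eq_iff_eq.1 h1 ▸ h2, cmpOuter_lt_trans _ _ _ h1' h2'⟩
theorem cmpOuter_lt_trans :
    ∀ ls ms ns, cmpOuter ls ms = .lt → cmpOuter ms ns = .lt → cmpOuter ls ns = .lt
  | [], [], [] => by simp [cmpOuter]
  | [], _ :: _, [] => by simp [cmpOuter]
  | [], [], _ :: _ => fun _ _ => rfl
  | [], _ :: _, _ :: _ => fun _ _ => rfl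
  | _ :: _, [], _ => by simp [cmpOuter]
  | _ :: _, _ :: _, [] => by simp [cmpOuter]
  | l :: ls, m :: ms, n :: ns => by
    rw [cmpOuter, cmpOuter, cmpOuter]
    simp only [Ordering.then_eq_lt, Ordering.then_eq_eq]
    rintro (((h1 | ⟨h1, h1'⟩) | ⟨⟨h1, h1'⟩, h1''⟩)) (((h2 | ⟨h2, h2'⟩) | ⟨⟨h2, h2'⟩, h2''⟩))
    · exact Or.inl (Or.inl (compare_lt_iff_lt.2
        ((compare_lt_iff_lt.1 h1).trans (compare_lt_iff_lt.1 h2))))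
    · exact Or.inl (Or.inl (compare_eq_iff_eq.1 h2 ▸ h1))
    · exact Or.inl (Or.inl (compare_eq_iff_eq.1 h2 ▸ h1))
    · exact Or.inl (Or.inl (compare_eq_iff_eq.1 h1 ▸ h2))
    · exact Or.inl (Or.inr ⟨compare_eq_iff_eq.1 h1 ▸ h2, cmpInner_lt_trans _ _ _ h1' h2'⟩)
    · exact Or.inl (Or.inr ⟨compare_eq_iff_eq.1 h1 ▸ h2, cmpInner_eq _ _ h2' ▸ h1'⟩)
    · exact Or.inl (Or.inl (compare_eq_iff_eq.1 h1 ▸ h2))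
    · exact Or.inl (Or.inr ⟨compare_eq_iff_eq.1 h1 ▸ h2, cmpInner_eq _ _ h1' ▸ h2'⟩)
    · exact Or.inr ⟨⟨compare_eq_iff_eq.1 h1 ▸ h2, cmpInner_eq _ _ h1' ▸ h2'⟩,
        cmpOuter_lt_trans _ _ _ h1'' h2''⟩
theorem cmpInner_lt_trans :
    ∀ l m n, cmpInner l m = .lt → cmpInner m n = .lt → cmpInner l n = .lt
  | [], [], [] => by simp [cmpInner]
  | [], _ :: _, [] => by simp [cmpInner]
  | [], [], _ :: _ => fun _ _ => rfl
  | [], _ :: _, _ :: _ => fun _ _ => rfl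
  | _ :: _, [], _ => by simp [cmpInner]
  | _ :: _, _ :: _, [] => by simp [cmpInner]
  | a :: as, b :: bs, c :: cs => by
    rw [cmpInner, cmpInner, cmpInner]
    simp only [Ordering.then_eq_lt]
    rintro (h1 | ⟨h1, h1'⟩) (h2 | ⟨h2, h2'⟩)
    · exact Or.inl (cmpT_lt_trans _ _ _ h1 h2)
    · exact Or.inl (cmpT_eq _ _ h2 ▸ h1)
    · exact Or.inl (cmpT_eq _ _ h1 ▸ h2)
    · exact Or.inr ⟨cmpT_eq _ _ h1 ▸ h2, cmpInner_lt_trans _ _ _ h1' h2'⟩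
end

/-- The combined comparison underlying `lle`. -/
private def cLL (L L' : List TTree) : Ordering :=
  (compare L.length L'.length).then (cmpInner L L')

private lemma cLL_swap (L L' : List TTree) : (cLL L L').swap = cLL L' L := by
  rw [cLL, cLL, Ordering.swap_then, natCompare_swap, cmpInner_swap]

private lemma cLL_eq {L L' : List TTree} (h : cLL L L' = .eq) : L = L' := by
  rw [cLL, Ordering.then_eq_eq] at h
  exact cmpInner_eq _ _ h.2

private lemma cLL_lt_trans {L M N : List TTree} (h1 : cLL L M = .lt) (h2 : cLL M N = .lt) :
    cLL L N = .lt := by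
  rw [cLL, Ordering.then_eq_lt] at *
  rcases h1 with h1 | ⟨h1, h1'⟩ <;> rcases h2 with h2 | ⟨h2, h2'⟩
  · exact Or.inl (compare_lt_iff_lt.2 ((compare_lt_iff_lt.1 h1).trans (compare_lt_iff_lt.1 h2)))
  · exact Or.inl (compare_eq_iff_eq.1 h2 ▸ h1)
  · exact Or.inl (compare_eq_iff_eq.1 h1 ▸ h2)
  · exact Or.inr ⟨compare_eq_iff_eq.1 h1 ▸ h2, cmpInner_lt_trans _ _ _ h1' h2'⟩

private lemma lle_iff (L L' : List TTree) : lle L L' ↔ cLL L L' ≠ .gt := Iff.rfl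

private lemma cLL_gt_iff {L L' : List TTree} : cLL L L' = .gt ↔ cLL L' L = .lt := by
  rw [← cLL_swap L L']
  cases cLL L L' <;> simp [Ordering.swap]

end TTree

/-- ≪ is a total order on T-lists whose elements all have the same root type:
    total, antisymmetric and transitive. -/
theorem tlist_lle_totalOrder (t : ℕ) :
    (∀ L L' : List TTree, (∀ a ∈ L, a.label = t) → (∀ b ∈ L', b.label = t) →
      TTree.lle L L' ∨ TTree.lle L' L) ∧
    (∀ L L' : List TTree, (∀ a ∈ L, a.label = t) → (∀ b ∈ L', b.label = t) →
      TTree.lle L L' → TTree.lle L' L → L = L') ∧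
    (∀ L L' L'' : List TTree, (∀ a ∈ L, a.label = t) → (∀ b ∈ L', b.label = t) →
      (∀ c ∈ L'', c.label = t) →
      TTree.lle L L' → TTree.lle L' L'' → TTree.lle L L'') := by
  refine ⟨fun L L' _ _ => ?_, fun L L' _ _ h h' => ?_, fun L L' L'' _ _ _ h h' => ?_⟩
  · rw [TTree.lle_iff, TTree.lle_iff]
    rcases hc : TTree.cLL L L' with _ | _ | _
    · exact Or.inl (by simp [hc])
    · exact Or.inl (by simp [hc])
    · exact Or.inr (by simp [TTree.cLL_gt_iff.1 hc])
  · rw [TTree.lle_iff] at h h'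
    rcases hc : TTree.cLL L L' with _ | _ | _
    · exact absurd (TTree.cLL_gt_iff.2 hc) h'
    · exact TTree.cLL_eq hc
    · exact absurd hc h
  · rw [TTree.lle_iff] at *
    rcases hc : TTree.cLL L L' with _ | _ | _
    · rcases hc' : TTree.cLL L' L'' with _ | _ | _
      · simp [TTree.cLL_lt_trans hc hc']
      · rw [← TTree.cLL_eq hc']; simp [hc]
      · exact absurd hc' h'
    · rw [TTree.cLL_eq hc]; exact h'
    · exact absurd hc h
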